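/- (Lemma 1, sufficient decrease.) Under Assumption 1, let (x^k, u^k)_{k∈ℕ} be a sequence generated by the Unifying AM algorithm. Then there exists ρ₁ > 0 such that for all k ≥ 1, ρ₁ ‖x^{k+1} − x^k‖² ≤ G(x^k, u^{k−1}) − G(x^{k+1}, u^k). -/

import Mathlib

open scoped RealInnerProductSpace BigOperators
open Finset

/-- The smooth surrogate objective `G(x,u)`. -/
noncomputable def objG (n N m : ℕ)
    (E1 : Finset (Fin N × Fin N)) (E2 : Finset (Fin N × Fin m))
    (a : Fin m → EuclideanSpace ℝ (Fin n))
    (d1 : Fin N × Fin N → ℝ) (d2 : Fin N × Fin m → ℝ)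
    (x : Fin N → EuclideanSpace ℝ (Fin n))
    (u1 : Fin N × Fin N → EuclideanSpace ℝ (Fin n))
    (u2 : Fin N × Fin m → EuclideanSpace ℝ (Fin n)) : ℝ :=
  (∑ e ∈ E1, (‖x e.1 - x e.2‖ ^ 2 - 2 * d1 e * ⟪u1 e, x e.1 - x e.2⟫)) +
  ∑ e ∈ E2, (‖x e.1 - a e.2‖ ^ 2 - 2 * d2 e * ⟪u2 e, x e.1 - a e.2⟫)

/-- The relation of the network graph on vertices `V ∪ A = Fin N ⊕ Fin m`. -/
def netRel (N m : ℕ) (E1 : Finset (Fin N × Fin N)) (E2 : Finset (Fin N × Fin m)) :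
    (Fin N ⊕ Fin m) → (Fin N ⊕ Fin m) → Prop := fun p q =>
  match p, q with
  | Sum.inl i, Sum.inl j => (i, j) ∈ E1
  | Sum.inl i, Sum.inr j => (i, j) ∈ E2
  | _, _ => False

/-- `(x^k, u^k)` is a sequence generated by the Unifying AM algorithm with
clusters `C 0, …, C (q−1)`:
* the initial `u^0` is feasible (each `u^0_{ij}` in the closed unit ball);
* the sensor update produces `x^{k+1}` from `x^k` through intermediate
  configurations `z 0 = x^k, …, z q = x^{k+1}`, where `z (l+1)` agrees with
  `z l` off the cluster `C l` and minimizes `G(·, u^k)` over all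
  configurations agreeing with `z l` off `C l`;
* the auxiliary update sets `u^{k+1}_{ij} = v^{k+1}_{ij}/‖v^{k+1}_{ij}‖` when
  `v^{k+1}_{ij} ≠ 0` and `0` otherwise (both cases captured by `‖v‖⁻¹ • v`,
  since `(0:ℝ)⁻¹ = 0`). -/
def IsAMSeq (n N m : ℕ)
    (E1 : Finset (Fin N × Fin N)) (E2 : Finset (Fin N × Fin m))
    (a : Fin m → EuclideanSpace ℝ (Fin n))
    (d1 : Fin N × Fin N → ℝ) (d2 : Fin N × Fin m → ℝ)
    (q : ℕ) (C : Fin q → Finset (Fin N))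
    (x : ℕ → Fin N → EuclideanSpace ℝ (Fin n))
    (u1 : ℕ → Fin N × Fin N → EuclideanSpace ℝ (Fin n))
    (u2 : ℕ → Fin N × Fin m → EuclideanSpace ℝ (Fin n)) : Prop :=
  (∀ e ∈ E1, ‖u1 0 e‖ ≤ 1) ∧ (∀ e ∈ E2, ‖u2 0 e‖ ≤ 1) ∧
  (∀ k : ℕ, ∃ z : Fin (q + 1) → Fin N → EuclideanSpace ℝ (Fin n),
    z 0 = x k ∧ z (Fin.last q) = x (k + 1) ∧
    ∀ l : Fin q,
      (∀ i : Fin N, i ∉ C l → z l.succ i = z l.castSucc i) ∧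
      (∀ w : Fin N → EuclideanSpace ℝ (Fin n),
        (∀ i : Fin N, i ∉ C l → w i = z l.castSucc i) →
        objG n N m E1 E2 a d1 d2 (z l.succ) (u1 k) (u2 k) ≤
          objG n N m E1 E2 a d1 d2 w (u1 k) (u2 k))) ∧
  (∀ k : ℕ, ∀ e ∈ E1, u1 (k + 1) e =
    ‖x (k + 1) e.1 - x (k + 1) e.2‖⁻¹ • (x (k + 1) e.1 - x (k + 1) e.2)) ∧
  (∀ k : ℕ, ∀ e ∈ E2, u2 (k + 1) e =
    ‖x (k + 1) e.1 - a e.2‖⁻¹ • (x (k + 1) e.1 - a e.2))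

/-!
For fixed `u`, `G(·, u)` is a quadratic function of the configuration whose quadratic part is the
Dirichlet energy `Q(δ) = ∑_{E1} ‖δᵢ - δⱼ‖² + ∑_{E2} ‖δᵢ‖²` of the network with the anchors held at
`0`. At an exact block minimizer the first-order term in every admissible direction vanishes, so
each block update decreases `G` by exactly `Q` of the step. Connectivity together with an anchor
makes `Q` positive definite, hence `σ ‖δ‖² ≤ Q(δ)` by compactness of the unit sphere, and
Cauchy–Schwarz over the `q` blocks of a sweep yields the decrease with `ρ₁ = σ / (q + 1)`. The
auxiliary update cannot increase `G`, since `⟪u, v⟫ ≤ ‖v‖ = ⟪v / ‖v‖, v⟫` whenever `‖u‖ ≤ 1`.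
-/

theorem exists_pos_mul_norm_sq_le {E : Type*} [NormedAddCommGroup E] [NormedSpace ℝ E]
    [ProperSpace E] {f : E → ℝ} (hf : Continuous f) (hsmul : ∀ (c : ℝ) v, f (c • v) = c ^ 2 * f v)
    (hpos : ∀ v, v ≠ 0 → 0 < f v) : ∃ σ > 0, ∀ v, σ * ‖v‖ ^ 2 ≤ f v := by
  obtain ⟨σ, hσ, hσf⟩ := (isCompact_sphere (0 : E) 1).exists_forall_le' hf.continuousOn
    fun v hv => hpos v (ne_zero_of_mem_unit_sphere ⟨v, hv⟩)
  refine ⟨σ, hσ, fun v => ?_⟩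
  rcases eq_or_ne v 0 with rfl | hv
  · have : f 0 = 0 := by simpa using hsmul 0 0
    simp [this]
  have hunit : ‖v‖⁻¹ • v ∈ Metric.sphere (0 : E) 1 := by
    simpa using norm_smul_inv_norm (𝕜 := ℝ) hv
  calc σ * ‖v‖ ^ 2 ≤ ‖v‖ ^ 2 * f (‖v‖⁻¹ • v) := by
        rw [mul_comm]; exact mul_le_mul_of_nonneg_left (hσf _ hunit) (sq_nonneg _)
    _ = f v := by rw [← hsmul, smul_smul, mul_inv_cancel₀ (norm_ne_zero_iff.2 hv), one_smul]

theorem norm_sum_sq_le_card_mul {ι E : Type*} [SeminormedAddCommGroup E] (s : Finset ι)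
    (v : ι → E) : ‖∑ i ∈ s, v i‖ ^ 2 ≤ #s * ∑ i ∈ s, ‖v i‖ ^ 2 :=
  (pow_le_pow_left₀ (norm_nonneg _) (norm_sum_le s v) 2).trans (sq_sum_le_card_mul_sum_sq ..)

theorem Fin.sum_castSucc_sub_succ {M : Type*} [AddCommGroup M] {q : ℕ} (f : Fin (q + 1) → M) :
    ∑ l : Fin q, (f l.castSucc - f l.succ) = f 0 - f (Fin.last q) := by
  induction q with
  | zero => simp
  | succ q ih =>
    rw [Fin.sum_univ_castSucc]
    simp only [Fin.succ_castSucc]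
    rw [ih fun l => f l.castSucc, Fin.succ_last, Fin.castSucc_zero]
    abel

theorem SimpleGraph.Reachable.eq_of_forall_adj {V α : Type*} {G : SimpleGraph V} {f : V → α}
    (hf : ∀ u v, G.Adj u v → f u = f v) {u v : V} (h : G.Reachable u v) : f u = f v := by
  obtain ⟨w⟩ := h
  induction w with
  | nil => rfl
  | cons hadj _ ih => exact (hf _ _ hadj).trans ih

theorem real_inner_le_inner_inv_norm_smul {F : Type*} [NormedAddCommGroup F]
    [InnerProductSpace ℝ F] {u : F} (hu : ‖u‖ ≤ 1) (v : F) : ⟪u, v⟫ ≤ ⟪‖v‖⁻¹ • v, v⟫ := by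
  rw [real_inner_smul_left, real_inner_self_eq_norm_sq]
  rcases eq_or_ne v 0 with rfl | hv
  · simp
  calc ⟪u, v⟫ ≤ ‖u‖ * ‖v‖ := real_inner_le_norm _ _
    _ ≤ ‖v‖ := mul_le_of_le_one_left (norm_nonneg _) hu
    _ = ‖v‖⁻¹ * ‖v‖ ^ 2 := by field_simp

theorem norm_add_smul_sq_sub_inner {F : Type*} [NormedAddCommGroup F] [InnerProductSpace ℝ F]
    (v w u : F) (d t : ℝ) :
    ‖v + t • w‖ ^ 2 - 2 * d * ⟪u, v + t • w⟫ =
      (‖v‖ ^ 2 - 2 * d * ⟪u, v⟫) + t * (2 * ⟪v, w⟫ - 2 * d * ⟪u, w⟫) + t ^ 2 * ‖w‖ ^ 2 := by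
  rw [norm_add_sq_real, inner_add_right, real_inner_smul_right, real_inner_smul_right, norm_smul,
    Real.norm_eq_abs, mul_pow, sq_abs]
  ring

theorem norm_inv_norm_smul_le_one {F : Type*} [NormedAddCommGroup F] [NormedSpace ℝ F] (v : F) :
    ‖‖v‖⁻¹ • v‖ ≤ 1 := by
  rcases eq_or_ne v 0 with rfl | hv
  · simp
  · exact (norm_smul_inv_norm hv).le

section Network

variable {n N m : ℕ} {E1 : Finset (Fin N × Fin N)} {E2 : Finset (Fin N × Fin m)}
  {a : Fin m → EuclideanSpace ℝ (Fin n)} {d1 : Fin N × Fin N → ℝ} {d2 : Fin N × Fin m → ℝ}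

noncomputable def dirichletEnergy {F : Type*} [NormedAddCommGroup F] (E1 : Finset (Fin N × Fin N))
    (E2 : Finset (Fin N × Fin m)) (δ : Fin N → F) : ℝ :=
  ∑ e ∈ E1, ‖δ e.1 - δ e.2‖ ^ 2 + ∑ e ∈ E2, ‖δ e.1‖ ^ 2

section Energy

variable {F : Type*} [NormedAddCommGroup F]

theorem dirichletEnergy_nonneg (δ : Fin N → F) : 0 ≤ dirichletEnergy E1 E2 δ := by
  unfold dirichletEnergy; positivity

theorem continuous_dirichletEnergy : Continuous (dirichletEnergy (F := F) E1 E2) := by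
  unfold dirichletEnergy; fun_prop

theorem dirichletEnergy_smul [NormedSpace ℝ F] (c : ℝ) (δ : Fin N → F) :
    dirichletEnergy E1 E2 (c • δ) = c ^ 2 * dirichletEnergy E1 E2 δ := by
  simp only [dirichletEnergy, Pi.smul_apply, ← smul_sub, norm_smul, Real.norm_eq_abs, mul_pow,
    sq_abs, ← mul_sum, mul_add]

theorem dirichletEnergy_pos (hconn : (SimpleGraph.fromRel (netRel N m E1 E2)).Connected)
    (hm : 1 ≤ m) {δ : Fin N → F} (hδ : δ ≠ 0) : 0 < dirichletEnergy E1 E2 δ := by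
  refine (dirichletEnergy_nonneg δ).lt_of_ne fun h => hδ ?_
  obtain ⟨h1, h2⟩ := (add_eq_zero_iff_of_nonneg (by positivity) (by positivity)).1 h.symm
  rw [sum_eq_zero_iff_of_nonneg fun _ _ => sq_nonneg _] at h1 h2
  -- extending `δ` by `0` at the anchors gives a function constant along every edge
  have hrel : ∀ p q, netRel N m E1 E2 p q → Sum.elim δ 0 p = Sum.elim δ 0 q := by
    rintro (i | i) (j | j) hpq <;> simp only [netRel] at hpq
    · simpa [sub_eq_zero] using h1 (i, j) hpq
    · simpa using h2 (i, j) hpq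
  have hadj : ∀ p q, (SimpleGraph.fromRel (netRel N m E1 E2)).Adj p q →
      Sum.elim δ 0 p = Sum.elim δ 0 q := by
    rintro p q ⟨-, h | h⟩
    exacts [hrel p q h, (hrel q p h).symm]
  funext i
  exact (hconn.preconnected (.inl i) (.inr ⟨0, hm⟩)).eq_of_forall_adj hadj

theorem exists_pos_mul_sum_norm_sq_le_dirichletEnergy [NormedSpace ℝ F] [FiniteDimensional ℝ F]
    (hconn : (SimpleGraph.fromRel (netRel N m E1 E2)).Connected) (hm : 1 ≤ m) :
    ∃ σ > 0, ∀ δ : Fin N → F, σ * ∑ i, ‖δ i‖ ^ 2 ≤ dirichletEnergy E1 E2 δ := by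
  obtain ⟨σ, hσ, h⟩ := exists_pos_mul_norm_sq_le
    (f := fun v : PiLp 2 (fun _ : Fin N => F) => dirichletEnergy E1 E2 v.ofLp)
    (continuous_dirichletEnergy.comp (PiLp.continuous_ofLp 2 _))
    (fun c v => dirichletEnergy_smul c v.ofLp)
    (fun v hv => dirichletEnergy_pos hconn hm (by simpa using hv))
  exact ⟨σ, hσ, fun δ => by simpa [PiLp.norm_sq_eq_of_L2] using h (WithLp.toLp 2 δ)⟩

end Energy

theorem objG_add_smul (x δ : Fin N → EuclideanSpace ℝ (Fin n))
    (u1 : Fin N × Fin N → EuclideanSpace ℝ (Fin n))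
    (u2 : Fin N × Fin m → EuclideanSpace ℝ (Fin n)) :
    ∃ b : ℝ, ∀ t : ℝ, objG n N m E1 E2 a d1 d2 (x + t • δ) u1 u2 =
      objG n N m E1 E2 a d1 d2 x u1 u2 + t * b + t ^ 2 * dirichletEnergy E1 E2 δ := by
  refine ⟨∑ e ∈ E1, (2 * ⟪x e.1 - x e.2, δ e.1 - δ e.2⟫ - 2 * d1 e * ⟪u1 e, δ e.1 - δ e.2⟫) +
    ∑ e ∈ E2, (2 * ⟪x e.1 - a e.2, δ e.1⟫ - 2 * d2 e * ⟪u2 e, δ e.1⟫), fun t => ?_⟩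
  have h1 (e : Fin N × Fin N) :
      (x + t • δ) e.1 - (x + t • δ) e.2 = (x e.1 - x e.2) + t • (δ e.1 - δ e.2) := by
    simp only [Pi.add_apply, Pi.smul_apply, smul_sub]; abel
  have h2 (e : Fin N × Fin m) : (x + t • δ) e.1 - a e.2 = (x e.1 - a e.2) + t • δ e.1 := by
    simp only [Pi.add_apply, Pi.smul_apply]; abel
  simp only [objG, dirichletEnergy, h1, h2, norm_add_smul_sq_sub_inner, sum_add_distrib,
    ← mul_sum]
  ring

theorem objG_eq_add_dirichletEnergy_of_forall_le (C : Finset (Fin N))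
    {y y' : Fin N → EuclideanSpace ℝ (Fin n)}
    (u1 : Fin N × Fin N → EuclideanSpace ℝ (Fin n)) (u2 : Fin N × Fin m → EuclideanSpace ℝ (Fin n))
    (hagree : ∀ i ∉ C, y' i = y i)
    (hmin : ∀ w : Fin N → EuclideanSpace ℝ (Fin n), (∀ i ∉ C, w i = y i) →
      objG n N m E1 E2 a d1 d2 y' u1 u2 ≤ objG n N m E1 E2 a d1 d2 w u1 u2) :
    objG n N m E1 E2 a d1 d2 y u1 u2 =
      objG n N m E1 E2 a d1 d2 y' u1 u2 + dirichletEnergy E1 E2 (y - y') := by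
  obtain ⟨b, hb⟩ := objG_add_smul (E1 := E1) (E2 := E2) (a := a) (d1 := d1) (d2 := d2)
    y' (y - y') u1 u2
  have hline (t : ℝ) : 0 ≤ dirichletEnergy E1 E2 (y - y') * (t * t) + b * t + 0 := by
    have := hmin (y' + t • (y - y')) fun i hi => by simp [hagree i hi]
    rw [hb] at this
    linarith
  -- the line through `y'` in direction `y - y'` stays in the block, so the slope `b` vanishes
  have hb0 : b = 0 := by
    have := discrim_le_zero hline
    rw [discrim] at this
    nlinarith
  simpa [hb0] using hb 1

theorem objG_sweep_le {q : ℕ} {C : Fin q → Finset (Fin N)}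
    {u1 : Fin N × Fin N → EuclideanSpace ℝ (Fin n)} {u2 : Fin N × Fin m → EuclideanSpace ℝ (Fin n)}
    {σ : ℝ} (hσ : 0 ≤ σ)
    (hcoer : ∀ δ : Fin N → EuclideanSpace ℝ (Fin n), σ * ∑ i, ‖δ i‖ ^ 2 ≤ dirichletEnergy E1 E2 δ)
    (z : Fin (q + 1) → Fin N → EuclideanSpace ℝ (Fin n))
    (hz : ∀ l : Fin q, (∀ i : Fin N, i ∉ C l → z l.succ i = z l.castSucc i) ∧
      (∀ w : Fin N → EuclideanSpace ℝ (Fin n), (∀ i : Fin N, i ∉ C l → w i = z l.castSucc i) →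
        objG n N m E1 E2 a d1 d2 (z l.succ) u1 u2 ≤ objG n N m E1 E2 a d1 d2 w u1 u2)) :
    σ / (q + 1) * ∑ i, ‖z (Fin.last q) i - z 0 i‖ ^ 2 ≤
      objG n N m E1 E2 a d1 d2 (z 0) u1 u2 - objG n N m E1 E2 a d1 d2 (z (Fin.last q)) u1 u2 := by
  set S : Fin q → ℝ := fun l => ∑ i, ‖z l.castSucc i - z l.succ i‖ ^ 2
  have hdecrease : objG n N m E1 E2 a d1 d2 (z 0) u1 u2 -
      objG n N m E1 E2 a d1 d2 (z (Fin.last q)) u1 u2 =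
        ∑ l : Fin q, dirichletEnergy E1 E2 (z l.castSucc - z l.succ) := by
    rw [← Fin.sum_castSucc_sub_succ fun j => objG n N m E1 E2 a d1 d2 (z j) u1 u2]
    refine sum_congr rfl fun l _ => ?_
    rw [objG_eq_add_dirichletEnergy_of_forall_le (C l) u1 u2 (hz l).1 (hz l).2]
    ring
  have hcauchy : ∑ i, ‖z (Fin.last q) i - z 0 i‖ ^ 2 ≤ (q + 1) * ∑ l, S l :=
    calc ∑ i, ‖z (Fin.last q) i - z 0 i‖ ^ 2
        = ∑ i, ‖∑ l : Fin q, (z l.castSucc i - z l.succ i)‖ ^ 2 := by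
          refine sum_congr rfl fun i _ => ?_
          rw [Fin.sum_castSucc_sub_succ fun j => z j i, norm_sub_rev]
      _ ≤ ∑ i, q * ∑ l : Fin q, ‖z l.castSucc i - z l.succ i‖ ^ 2 :=
          sum_le_sum fun i _ => by
            simpa only [card_univ, Fintype.card_fin] using
              norm_sum_sq_le_card_mul univ fun l : Fin q => z l.castSucc i - z l.succ i
      _ = q * ∑ l, S l := by rw [← mul_sum, sum_comm]
      _ ≤ (q + 1) * ∑ l, S l := by
          gcongr
          linarith
  calc σ / (q + 1) * ∑ i, ‖z (Fin.last q) i - z 0 i‖ ^ 2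
      ≤ σ / (q + 1) * ((q + 1) * ∑ l, S l) := by gcongr
    _ = ∑ l, σ * S l := by field_simp; rw [mul_sum]
    _ ≤ ∑ l : Fin q, dirichletEnergy E1 E2 (z l.castSucc - z l.succ) :=
        sum_le_sum fun l _ => hcoer _
    _ = _ := hdecrease.symm

theorem objG_le_of_normalize (hd1 : ∀ e ∈ E1, 0 ≤ d1 e) (hd2 : ∀ e ∈ E2, 0 ≤ d2 e)
    (x : Fin N → EuclideanSpace ℝ (Fin n)) {u1 u1' : Fin N × Fin N → EuclideanSpace ℝ (Fin n)}
    {u2 u2' : Fin N × Fin m → EuclideanSpace ℝ (Fin n)}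
    (hu1 : ∀ e ∈ E1, ‖u1 e‖ ≤ 1) (hu2 : ∀ e ∈ E2, ‖u2 e‖ ≤ 1)
    (hu1' : ∀ e ∈ E1, u1' e = ‖x e.1 - x e.2‖⁻¹ • (x e.1 - x e.2))
    (hu2' : ∀ e ∈ E2, u2' e = ‖x e.1 - a e.2‖⁻¹ • (x e.1 - a e.2)) :
    objG n N m E1 E2 a d1 d2 x u1' u2' ≤ objG n N m E1 E2 a d1 d2 x u1 u2 := by
  unfold objG
  gcongr with e he e he
  · linarith [hd1 e he]
  · rw [hu1' e he]
    exact real_inner_le_inner_inv_norm_smul (hu1 e he) _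
  · linarith [hd2 e he]
  · rw [hu2' e he]
    exact real_inner_le_inner_inv_norm_smul (hu2 e he) _

namespace IsAMSeq

variable {q : ℕ} {C : Fin q → Finset (Fin N)} {x : ℕ → Fin N → EuclideanSpace ℝ (Fin n)}
  {u1 : ℕ → Fin N × Fin N → EuclideanSpace ℝ (Fin n)}
  {u2 : ℕ → Fin N × Fin m → EuclideanSpace ℝ (Fin n)}

theorem norm_u_le_one (h : IsAMSeq n N m E1 E2 a d1 d2 q C x u1 u2) (k : ℕ) :
    (∀ e ∈ E1, ‖u1 k e‖ ≤ 1) ∧ (∀ e ∈ E2, ‖u2 k e‖ ≤ 1) := by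
  obtain ⟨h10, h20, -, hu1, hu2⟩ := h
  cases k with
  | zero => exact ⟨h10, h20⟩
  | succ k =>
    exact ⟨fun e he => hu1 k e he ▸ norm_inv_norm_smul_le_one _,
      fun e he => hu2 k e he ▸ norm_inv_norm_smul_le_one _⟩

theorem objG_u_succ_le (h : IsAMSeq n N m E1 E2 a d1 d2 q C x u1 u2)
    (hd1 : ∀ e ∈ E1, 0 ≤ d1 e) (hd2 : ∀ e ∈ E2, 0 ≤ d2 e) (k : ℕ) :
    objG n N m E1 E2 a d1 d2 (x (k + 1)) (u1 (k + 1)) (u2 (k + 1)) ≤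
      objG n N m E1 E2 a d1 d2 (x (k + 1)) (u1 k) (u2 k) :=
  objG_le_of_normalize hd1 hd2 _ (h.norm_u_le_one k).1 (h.norm_u_le_one k).2
    (h.2.2.2.1 k) (h.2.2.2.2 k)

theorem sensor_update_decrease (h : IsAMSeq n N m E1 E2 a d1 d2 q C x u1 u2) {σ : ℝ}
    (hσ : 0 ≤ σ)
    (hcoer : ∀ δ : Fin N → EuclideanSpace ℝ (Fin n), σ * ∑ i, ‖δ i‖ ^ 2 ≤ dirichletEnergy E1 E2 δ)
    (k : ℕ) :
    σ / (q + 1) * ∑ i, ‖x (k + 1) i - x k i‖ ^ 2 ≤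
      objG n N m E1 E2 a d1 d2 (x k) (u1 k) (u2 k) -
        objG n N m E1 E2 a d1 d2 (x (k + 1)) (u1 k) (u2 k) := by
  obtain ⟨z, hz0, hzlast, hz⟩ := h.2.2.1 k
  simpa only [hz0, hzlast] using objG_sweep_le hσ hcoer z hz

end IsAMSeq

end Network

theorem stmt11_general (n N m : ℕ)
    (E1 : Finset (Fin N × Fin N))
    (E2 : Finset (Fin N × Fin m))
    (a : Fin m → EuclideanSpace ℝ (Fin n))
    (d1 : Fin N × Fin N → ℝ) (d2 : Fin N × Fin m → ℝ)
    (hd1 : ∀ e ∈ E1, 0 ≤ d1 e) (hd2 : ∀ e ∈ E2, 0 ≤ d2 e)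
    (hconn : (SimpleGraph.fromRel (netRel N m E1 E2)).Connected)
    (hm : 1 ≤ m)
    (q : ℕ) (C : Fin q → Finset (Fin N))
    (x : ℕ → Fin N → EuclideanSpace ℝ (Fin n))
    (u1 : ℕ → Fin N × Fin N → EuclideanSpace ℝ (Fin n))
    (u2 : ℕ → Fin N × Fin m → EuclideanSpace ℝ (Fin n))
    (hAM : IsAMSeq n N m E1 E2 a d1 d2 q C x u1 u2) :
    ∃ ρ₁ : ℝ, 0 < ρ₁ ∧ ∀ k : ℕ, 1 ≤ k →
      ρ₁ * ∑ i, ‖x (k + 1) i - x k i‖ ^ 2 ≤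
        objG n N m E1 E2 a d1 d2 (x k) (u1 (k - 1)) (u2 (k - 1)) -
          objG n N m E1 E2 a d1 d2 (x (k + 1)) (u1 k) (u2 k) := by
  obtain ⟨σ, hσ, hcoer⟩ :=
    exists_pos_mul_sum_norm_sq_le_dirichletEnergy (F := EuclideanSpace ℝ (Fin n)) hconn hm
  refine ⟨σ / (q + 1), by positivity, fun k hk => ?_⟩
  obtain ⟨j, rfl⟩ := Nat.exists_eq_add_of_le' hk
  have hx := hAM.sensor_update_decrease hσ.le hcoer (j + 1)
  have hu := hAM.objG_u_succ_le hd1 hd2 j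
  rw [Nat.add_sub_cancel]
  linarith

/-- Lemma 1 (sufficient decrease): under Assumption 1, along any sequence
generated by the Unifying AM algorithm there is `ρ₁ > 0` with
`ρ₁‖x^{k+1} − x^k‖² ≤ G(x^k, u^{k−1}) − G(x^{k+1}, u^k)` for all `k ≥ 1`. -/
theorem stmt11 (n N m : ℕ) (hn : 1 ≤ n) (hN : 1 ≤ N)
    (E1 : Finset (Fin N × Fin N)) (hE1 : ∀ e ∈ E1, e.1 < e.2)
    (E2 : Finset (Fin N × Fin m))
    (a : Fin m → EuclideanSpace ℝ (Fin n))
    (d1 : Fin N × Fin N → ℝ) (d2 : Fin N × Fin m → ℝ)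
    (hd1 : ∀ e ∈ E1, 0 ≤ d1 e) (hd2 : ∀ e ∈ E2, 0 ≤ d2 e)
    (hconn : (SimpleGraph.fromRel (netRel N m E1 E2)).Connected)
    (hm : 1 ≤ m)
    (q : ℕ) (C : Fin q → Finset (Fin N))
    (hCne : ∀ l, (C l).Nonempty)
    (hCdisj : ∀ l l', l ≠ l' → Disjoint (C l) (C l'))
    (hCcover : ∀ i : Fin N, ∃ l, i ∈ C l)
    (x : ℕ → Fin N → EuclideanSpace ℝ (Fin n))
    (u1 : ℕ → Fin N × Fin N → EuclideanSpace ℝ (Fin n))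
    (u2 : ℕ → Fin N × Fin m → EuclideanSpace ℝ (Fin n))
    (hAM : IsAMSeq n N m E1 E2 a d1 d2 q C x u1 u2) :
    ∃ ρ₁ : ℝ, 0 < ρ₁ ∧ ∀ k : ℕ, 1 ≤ k →
      ρ₁ * ∑ i, ‖x (k + 1) i - x k i‖ ^ 2 ≤
        objG n N m E1 E2 a d1 d2 (x k) (u1 (k - 1)) (u2 (k - 1)) -
          objG n N m E1 E2 a d1 d2 (x (k + 1)) (u1 k) (u2 k) :=
  stmt11_general n N m E1 E2 a d1 d2 hd1 hd2 hconn hm q C x u1 u2 hAM
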